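/- Let n ≥ 2 and 1 ≤ k ≤ n−1, and consider the k-circulant digraph C_n(1,…,k). Let σ be a positive integer. Suppose S1 and S2 are disjoint subsets whose union is the whole vertex set, i ∈ S1, and b is an integer with 0 < b ≤ k such that i+b ∈ S2 and the vertices i, i+1, …, i+b−1 all lie in S1 (arithmetic mod n). If both |K_i \ S1| ≤ σ−1 and |K_{i+b} \ S2| ≤ σ−1, then 2σ ≥ k+2. -/

import Mathlib

/-!
The `k` in-neighbours of `i + b` are `i + b - a` for `1 ≤ a ≤ k`; those with `a ≤ b` lie in the
segment `i, …, i + b - 1 ⊆ S1`, the others are in-neighbours of `i`. Hence every in-neighbour of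
`i + b` in `S2` is an in-neighbour of `i` outside `S1`, and
`k = |K_{i+b} \ S2| + |K_{i+b} ∩ S2| ≤ |K_{i+b} \ S2| + |K_i \ S1| ≤ 2(σ - 1)`.
-/

/-- In-neighbor set of vertex `j` in the `k`-circulant digraph `C_n(1,…,k)`:
`K_j = {j-1, j-2, …, j-k}` (mod `n`). -/
def circInNbrs (n k : ℕ) (j : ZMod n) : Finset (ZMod n) :=
  (Finset.Icc 1 k).image fun a : ℕ => j - (a : ZMod n)

open Finset

theorem card_circInNbrs {n k : ℕ} (hk : k ≤ n - 1) (j : ZMod n) : #(circInNbrs n k j) = k := by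
  have hmod : ∀ a ∈ Icc 1 k, a % n = a := by
    intro a ha
    rcases Nat.eq_zero_or_pos n with rfl | hn
    · exact Nat.mod_zero a
    · exact Nat.mod_eq_of_lt (by rw [mem_Icc] at ha; omega)
  rw [circInNbrs, card_image_of_injOn, Nat.card_Icc, Nat.add_sub_cancel]
  intro a ha a' ha' h
  have hcast := (ZMod.natCast_eq_natCast_iff' a a' n).1 (sub_right_injective h)
  rwa [hmod a ha, hmod a' ha'] at hcast

theorem circInNbrs_add_subset (n k b : ℕ) (i : ZMod n) :
    circInNbrs n k (i + b) ⊆ (range b).image (fun c : ℕ => i + c) ∪ circInNbrs n k i := by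
  intro v hv
  obtain ⟨a, ha, rfl⟩ := mem_image.1 hv
  rw [mem_Icc] at ha
  rcases le_or_gt a b with hab | hab
  · refine mem_union_left _ (mem_image.2 ⟨b - a, mem_range.2 (by omega), ?_⟩)
    push_cast [Nat.cast_sub hab]
    ring
  · refine mem_union_right _ (mem_image.2 ⟨a - b, mem_Icc.2 (by omega), ?_⟩)
    push_cast [Nat.cast_sub hab.le]
    ring

theorem circInNbrs_add_sdiff_subset {n k b : ℕ} {S : Finset (ZMod n)} {i : ZMod n}
    (hseg : ∀ c : ℕ, c < b → i + c ∈ S) :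
    circInNbrs n k (i + b) \ S ⊆ circInNbrs n k i \ S := by
  intro v hv
  obtain ⟨hvK, hvS⟩ := mem_sdiff.1 hv
  refine mem_sdiff.2 ⟨?_, hvS⟩
  rcases mem_union.1 (circInNbrs_add_subset n k b i hvK) with hvseg | hvKi
  · obtain ⟨c, hc, rfl⟩ := mem_image.1 hvseg
    exact absurd (hseg c (mem_range.1 hc)) hvS
  · exact hvKi

theorem circulant_sigma_lower_bound_general (n k σ : ℕ) (hk2 : k ≤ n - 1) (S1 S2 : Finset (ZMod n))
    (hdisj : Disjoint S1 S2) (i : ZMod n) (b : ℕ)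
    (hseg : ∀ c : ℕ, c < b → (i + (c : ZMod n)) ∈ S1)
    (hsmall1 : (((circInNbrs n k i) \ S1).card : ℤ) ≤ (σ : ℤ) - 1)
    (hsmall2 : (((circInNbrs n k (i + (b : ZMod n))) \ S2).card : ℤ) ≤ (σ : ℤ) - 1) :
    k + 2 ≤ 2 * σ := by
  set T := circInNbrs n k (i + b)
  have hsplit : #(T \ S2) + #(T ∩ S2) = k := by
    rw [card_sdiff_add_card_inter, card_circInNbrs hk2]
  have hinter : T ∩ S2 ⊆ T \ S1 :=
    le_sdiff.2 ⟨inter_subset_left, hdisj.symm.mono_left inter_subset_right⟩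
  have hcard : #(T ∩ S2) ≤ #(circInNbrs n k i \ S1) :=
    card_le_card (hinter.trans (circInNbrs_add_sdiff_subset hseg))
  omega

/-- If `S1, S2` partition the vertex set of `C_n(1,…,k)`, `i ∈ S1`, `0 < b ≤ k`,
`i + b ∈ S2`, the vertices `i, i+1, …, i+b-1` all lie in `S1`, and both
`|K_i \ S1| ≤ σ - 1` and `|K_{i+b} \ S2| ≤ σ - 1`, then `2σ ≥ k + 2`. -/
theorem circulant_sigma_lower_bound (n k σ : ℕ) (hn : 2 ≤ n) (hk1 : 1 ≤ k)
    (hk2 : k ≤ n - 1) (hσ1 : 1 ≤ σ) (S1 S2 : Finset (ZMod n))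
    (hdisj : Disjoint S1 S2) (hcover : ∀ v : ZMod n, v ∈ S1 ∨ v ∈ S2)
    (i : ZMod n) (hi : i ∈ S1) (b : ℕ) (hb0 : 0 < b) (hbk : b ≤ k)
    (hib : (i + (b : ZMod n)) ∈ S2)
    (hseg : ∀ c : ℕ, c < b → (i + (c : ZMod n)) ∈ S1)
    (hsmall1 : (((circInNbrs n k i) \ S1).card : ℤ) ≤ (σ : ℤ) - 1)
    (hsmall2 : (((circInNbrs n k (i + (b : ZMod n))) \ S2).card : ℤ) ≤ (σ : ℤ) - 1) :
    k + 2 ≤ 2 * σ :=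
  circulant_sigma_lower_bound_general n k σ hk2 S1 S2 hdisj i b hseg hsmall1 hsmall2
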